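/- (Bounded Real Lemma, necessity part.) Let L, H, V, N, Z be bounded operators on a complex Hilbert space with H self-adjoint and V self-adjoint nonnegative, let g > 0 and λ ≥ 0 be real numbers, and set Γ = g²·I − Z*Z. Suppose that for every bounded operator w such that w and w* commute with each of V, H, L, L*, N, N*, Z, Z*, one has 𝓛_L(V) − i[V, H] − w*Γw + w*([V, L] + Z*N) + ([L*, V] + N*Z)w + N*N − λ·I ≤ 0. Then Γ ≥ 0. -/

import Mathlib

noncomputable section

open Finset
open scoped ComplexOrder

variable {E : Type*} [NormedAddCommGroup E] [InnerProductSpace ℂ E] [CompleteSpace E]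

/-- Operator ordering: `A ≤ B` iff `⟨ψ, Aψ⟩ ≤ ⟨ψ, Bψ⟩` for all `ψ`. -/
def opLE (A B : E →L[ℂ] E) : Prop :=
  ∀ ψ : E, (inner ℂ ψ (A ψ) : ℂ) ≤ (inner ℂ ψ (B ψ) : ℂ)

/-- The single-channel Lindblad superoperator `𝓛_L(X) = (1/2)(L*[X,L] + [L*,X]L)`. -/
def lind1 (L X : E →L[ℂ] E) : E →L[ℂ] E :=
  (2 : ℂ)⁻¹ • (star L * ⁅X, L⁆ + ⁅star L, X⁆ * L)

/- Taking the scalar input `w = t • 1` with `t` real, which commutes with everything and is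
self-adjoint, turns the dissipation inequality into `A + t B - t² Γ ≤ 0` for all real `t`, with
`A` and `B` independent of `t`. Testing against a vector `ψ`, a real quadratic that is bounded
above on all of `ℝ` has a nonnegative coefficient of `-t²`, so `⟨ψ, Γψ⟩ ≥ 0`. -/

theorem nonneg_of_forall_quadratic_nonpos {a b c : ℝ} (h : ∀ t : ℝ, a + t * b - t ^ 2 * c ≤ 0) :
    0 ≤ c := by
  by_contra! hc
  have ha := h 0
  -- averaging the bounds at `±t` gives `a ≤ t² c`, and `t² = (a - 1) / c` makes that `a ≤ a - 1`
  set t := √((a - 1) / c)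
  have ht : t ^ 2 * c = a - 1 := by
    rw [Real.sq_sqrt (div_nonneg_of_nonpos (by linarith) hc.le), div_mul_cancel₀ _ hc.ne]
  have hpos := h t
  have hneg := h (-t)
  linarith

theorem Complex.nonneg_of_forall_quadratic_nonpos {a b c : ℂ}
    (h : ∀ t : ℝ, a + t * b - t ^ 2 * c ≤ 0) : 0 ≤ c := by
  have hre (t : ℝ) : a.re + t * b.re - t ^ 2 * c.re ≤ 0 := by
    simpa [pow_two] using (Complex.le_def.mp (h t)).1
  have him (t : ℝ) : a.im + t * b.im - t ^ 2 * c.im = 0 := by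
    simpa [pow_two] using (Complex.le_def.mp (h t)).2
  refine Complex.le_def.mpr ⟨by simpa using _root_.nonneg_of_forall_quadratic_nonpos hre, ?_⟩
  have hzero := him 0
  have hpos := him 1
  have hneg := him (-1)
  simp only [Complex.zero_im]
  linarith

theorem opLE_zero_of_forall_quadratic {F : Type*} [NormedAddCommGroup F] [InnerProductSpace ℂ F]
    {A B C : F →L[ℂ] F} (h : ∀ t : ℝ, opLE (A + (t : ℂ) • B - (t : ℂ) ^ 2 • C) 0) :
    opLE 0 C := fun ψ => by
  simpa using Complex.nonneg_of_forall_quadratic_nonpos fun t => by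
    simpa [inner_add_right, inner_sub_right, inner_smul_right] using h t ψ

theorem stmt_9_general
    (L Hm V N Z : E →L[ℂ] E) (g lam : ℝ)
    (h : ∀ w : E →L[ℂ] E,
      (∀ a ∈ ({V, Hm, L, star L, N, star N, Z, star Z} : Set (E →L[ℂ] E)),
        Commute w a ∧ Commute (star w) a) →
      opLE (lind1 L V + (-Complex.I) • ⁅V, Hm⁆
        - star w * ((g : ℂ) ^ 2 • 1 - star Z * Z) * w
        + star w * (⁅V, L⁆ + star Z * N) + (⁅star L, V⁆ + star N * Z) * w
        + star N * N - (lam : ℂ) • 1) 0) :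
    opLE 0 ((g : ℂ) ^ 2 • 1 - star Z * Z) := by
  refine opLE_zero_of_forall_quadratic (A := lind1 L V + (-Complex.I) • ⁅V, Hm⁆ + star N * N
    - (lam : ℂ) • 1) (B := ⁅V, L⁆ + star Z * N + (⁅star L, V⁆ + star N * Z)) fun t => ?_
  have hw : star ((t : ℂ) • (1 : E →L[ℂ] E)) = (t : ℂ) • 1 := by simp [star_smul]
  have hcomm (a : E →L[ℂ] E) : Commute ((t : ℂ) • 1) a := (Commute.one_left a).smul_left _
  convert h ((t : ℂ) • 1) fun a _ => ⟨hcomm a, by rw [hw]; exact hcomm a⟩ using 1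
  rw [hw]
  simp only [smul_mul_assoc, mul_smul_comm, one_mul, mul_one]
  module

/-- Bounded Real Lemma, necessity: with `Γ = g²I − Z*Z`, if
`𝓛_L(V) − i[V,H] − w*Γw + w*([V,L] + Z*N) + ([L*,V] + N*Z)w + N*N − λI ≤ 0`
for every `w` with `w, w*` commuting with `V, H, L, L*, N, N*, Z, Z*`, then `Γ ≥ 0`. -/
theorem stmt_9
    (L Hm V N Z : E →L[ℂ] E) (g lam : ℝ)
    (hHm : IsSelfAdjoint Hm) (hV : IsSelfAdjoint V)
    (hVpos : ∀ ψ : E, 0 ≤ (inner ℂ ψ (V ψ) : ℂ))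
    (hg : 0 < g) (hlam : 0 ≤ lam)
    (h : ∀ w : E →L[ℂ] E,
      (∀ a ∈ ({V, Hm, L, star L, N, star N, Z, star Z} : Set (E →L[ℂ] E)),
        Commute w a ∧ Commute (star w) a) →
      opLE (lind1 L V + (-Complex.I) • ⁅V, Hm⁆
        - star w * ((g : ℂ) ^ 2 • 1 - star Z * Z) * w
        + star w * (⁅V, L⁆ + star Z * N) + (⁅star L, V⁆ + star N * Z) * w
        + star N * N - (lam : ℂ) • 1) 0) :
    opLE 0 ((g : ℂ) ^ 2 • 1 - star Z * Z) :=
  stmt_9_general L Hm V N Z g lam h
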